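/- arXiv:2208.07053 — 2 statements merged into one kernel-verified Lean document; each statement's English description precedes it below -/
import Mathlib

section
/- Let ρ > 1/3. There exists a constant C = C(ρ) such that for all real σ₀, σ₁, σ₂, σ₃ with σ₃ ≠ 0, ∫_ℝ dx / ⟨σ₃x³ + σ₂x² + σ₁x + σ₀⟩^ρ ≤ C / |σ₃|^{1/3}. -/
/-!
Over `ℂ` a real polynomial of degree `n` with leading coefficient `a` factors as
`a ∏ (x - zᵢ)`, and `|x - zᵢ| ≥ |x - Re zᵢ|`. Hence on `{|p| ≤ l}` some `|x - Re zᵢ|` is at most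
`(l / |a|)^(1/n)`, and this sublevel set has measure at most `2n (l / |a|)^(1/n)`.
Since `⟨p x⟩^(-ρ) > t` forces `|p x| ≤ t^(-1/ρ)`, the layer-cake formula bounds the integral by
`∫₀¹ 2n (t^(-1/ρ) / |a|)^(1/n) dt`, which is finite because `nρ > 1`.
-/
open MeasureTheory

noncomputable def jb (x : ℝ) : ℝ := Real.sqrt (1 + x ^ 2)

open Polynomial

lemma one_le_jb (y : ℝ) : 1 ≤ jb y :=
  Real.one_le_sqrt.mpr (by nlinarith)

lemma abs_le_jb (y : ℝ) : |y| ≤ jb y :=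
  Real.abs_le_sqrt (by linarith)

lemma abs_le_of_lt_one_div_jb_rpow {y t ρ : ℝ} (ht : 0 < t) (hρ : 0 < ρ)
    (h : t < 1 / jb y ^ ρ) : |y| ≤ t ^ (-ρ⁻¹) := by
  have hjb : jb y ^ ρ < t⁻¹ := by
    rwa [lt_one_div ht (by have := one_le_jb y; positivity), one_div] at h
  have : jb y < t⁻¹ ^ ρ⁻¹ :=
    (Real.lt_rpow_inv_iff_of_pos (by linarith [one_le_jb y]) (by positivity) hρ).mpr hjb
  rw [Real.inv_rpow ht.le, ← Real.rpow_neg ht.le] at this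
  exact (abs_le_jb y).trans this.le

theorem lintegral_ofReal_le_of_meas_lt_le_mul_rpow {α : Type*} [MeasurableSpace α]
    {μ : Measure α} {f : α → ℝ} (hf : AEMeasurable f μ) (hf0 : 0 ≤ f) (hf1 : f ≤ 1)
    {K a : ℝ} (hK : 0 ≤ K) (ha : a < 1)
    (hμ : ∀ t ∈ Set.Ioc (0 : ℝ) 1, μ {x | t < f x} ≤ ENNReal.ofReal (K * t ^ (-a))) :
    ∫⁻ x, ENNReal.ofReal (f x) ∂μ ≤ ENNReal.ofReal (K / (1 - a)) := by
  have hint : IntegrableOn (fun t : ℝ => t ^ (-a)) (Set.Ioc 0 1) := by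
    rw [← intervalIntegrable_iff_integrableOn_Ioc_of_le zero_le_one]
    exact intervalIntegral.intervalIntegrable_rpow' (by linarith)
  have hrpow : ∫ t in Set.Ioc (0 : ℝ) 1, t ^ (-a) = 1 / (1 - a) := by
    rw [← intervalIntegral.integral_of_le zero_le_one, integral_rpow (Or.inl (by linarith)),
      Real.one_rpow, Real.zero_rpow (by linarith), neg_add_eq_sub]
    ring
  rw [lintegral_eq_lintegral_meas_lt μ (ae_of_all _ hf0) hf]
  calc ∫⁻ t in Set.Ioi 0, μ {x | t < f x}
      ≤ ∫⁻ t in Set.Ioi 0,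
          (Set.Ioc 0 1).indicator (fun t => ENNReal.ofReal (K * t ^ (-a))) t := by
        refine setLIntegral_mono' measurableSet_Ioi fun t ht => ?_
        by_cases ht1 : t ≤ 1
        · rw [Set.indicator_of_mem (Set.mem_Ioc.mpr ⟨ht, ht1⟩)]
          exact hμ t ⟨ht, ht1⟩
        · have : {x | t < f x} = ∅ :=
            Set.eq_empty_of_forall_notMem fun x hx => ht1 (hx.le.trans (hf1 x))
          simp [this]
    _ = ∫⁻ t in Set.Ioc 0 1, ENNReal.ofReal (K * t ^ (-a)) := by
        rw [lintegral_indicator measurableSet_Ioc, Measure.restrict_restrict measurableSet_Ioc,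
          Set.inter_eq_left.mpr Set.Ioc_subset_Ioi_self]
    _ = ENNReal.ofReal (∫ t in Set.Ioc 0 1, K * t ^ (-a)) := by
        refine (ofReal_integral_eq_lintegral_ofReal (hint.const_mul K) ?_).symm
        filter_upwards [ae_restrict_mem measurableSet_Ioc] with t ht
        exact mul_nonneg hK (Real.rpow_nonneg ht.1.le _)
    _ = ENNReal.ofReal (K / (1 - a)) := by
        rw [integral_const_mul, hrpow, mul_one_div]

theorem volume_setOf_prod_abs_sub_le_pow_card_le (s : Multiset ℝ) (hs : s ≠ 0) {l : ℝ}
    (hl : 0 < l) :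
    volume {x | (s.map fun r => |x - r|).prod ≤ l ^ Multiset.card s} ≤
      ENNReal.ofReal (2 * Multiset.card s * l) := by
  have hsub : {x | (s.map fun r => |x - r|).prod ≤ l ^ Multiset.card s} ⊆
      ⋃ r ∈ s.toFinset, Metric.closedBall r l := by
    intro x hx
    by_contra hfar
    simp only [Set.mem_iUnion, Multiset.mem_toFinset, Metric.mem_closedBall, Real.dist_eq,
      not_exists, not_le] at hfar
    have := Multiset.prod_map_lt_prod_map hs (fun _ => l) (fun r => |x - r|)
      (fun _ _ => hl) hfar
    rw [Multiset.map_const', Multiset.prod_replicate] at this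
    exact this.not_ge hx
  calc volume {x | (s.map fun r => |x - r|).prod ≤ l ^ Multiset.card s}
      ≤ ∑ r ∈ s.toFinset, volume (Metric.closedBall r l) :=
        (measure_mono hsub).trans (measure_biUnion_finset_le _ _)
    _ = s.toFinset.card * ENNReal.ofReal (2 * l) := by simp [Real.volume_closedBall]
    _ ≤ Multiset.card s * ENNReal.ofReal (2 * l) := by
        gcongr; exact Multiset.toFinset_card_le s
    _ = ENNReal.ofReal (2 * Multiset.card s * l) := by
        rw [mul_right_comm, ENNReal.ofReal_mul' (Nat.cast_nonneg _), ENNReal.ofReal_natCast,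
          mul_comm]

namespace Polynomial

theorem exists_multiset_mul_prod_abs_sub_le_abs_eval (p : ℝ[X]) :
    ∃ s : Multiset ℝ, Multiset.card s = p.natDegree ∧
      ∀ x, |p.leadingCoeff| * (s.map fun r => |x - r|).prod ≤ |p.eval x| := by
  set q := p.map (algebraMap ℝ ℂ)
  have hq : q.Splits := IsAlgClosed.splits q
  refine ⟨q.roots.map Complex.re, ?_, fun x => ?_⟩
  · rw [Multiset.card_map, splits_iff_card_roots.mp hq, natDegree_map]
  · have heval : q.eval (x : ℂ) = p.eval x := by
      simpa [q, eval_map_algebraMap] using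
        aeval_algebraMap_apply_eq_algebraMap_eval (A := ℂ) x p
    have hlc : q.leadingCoeff = p.leadingCoeff := by simp [q]
    calc |p.leadingCoeff| * ((q.roots.map Complex.re).map fun r => |x - r|).prod
        ≤ |p.leadingCoeff| * (q.roots.map fun z => ‖(x : ℂ) - z‖).prod := by
          rw [Multiset.map_map]
          gcongr
          refine Multiset.prod_map_le_prod_map₀ _ _ (fun _ _ => abs_nonneg _) fun z _ => ?_
          simpa using Complex.abs_re_le_norm ((x : ℂ) - z)
      _ = ‖q.eval (x : ℂ)‖ := by
          rw [hq.eval_eq_prod_roots, norm_mul, hlc, Complex.norm_real, Real.norm_eq_abs,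
            ← normHom_apply, map_multiset_prod, Multiset.map_map]
          rfl
      _ = |p.eval x| := by rw [heval, Complex.norm_real, Real.norm_eq_abs]

theorem volume_setOf_abs_eval_le_le (p : ℝ[X]) (hp : 0 < p.natDegree) {l : ℝ} (hl : 0 < l) :
    volume {x | |p.eval x| ≤ l} ≤
      ENNReal.ofReal (2 * p.natDegree * (l / |p.leadingCoeff|) ^ (p.natDegree : ℝ)⁻¹) := by
  obtain ⟨s, hcard, hs⟩ := p.exists_multiset_mul_prod_abs_sub_le_abs_eval
  have hlc : 0 < |p.leadingCoeff| :=
    abs_pos.mpr (leadingCoeff_ne_zero.mpr (ne_zero_of_natDegree_gt hp))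
  set m := (l / |p.leadingCoeff|) ^ (p.natDegree : ℝ)⁻¹
  have hm : m ^ p.natDegree = l / |p.leadingCoeff| :=
    Real.rpow_inv_natCast_pow (by positivity) hp.ne'
  have hsub : {x | |p.eval x| ≤ l} ⊆
      {x | (s.map fun r => |x - r|).prod ≤ m ^ Multiset.card s} := by
    intro x hx
    rw [Set.mem_ofPred_eq, hcard, hm, le_div_iff₀ hlc, mul_comm]
    exact (hs x).trans hx
  rw [← hcard]
  exact (measure_mono hsub).trans <| volume_setOf_prod_abs_sub_le_pow_card_le s
    (Multiset.card_pos.mp (hcard ▸ hp)) (by positivity)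

theorem lintegral_one_div_jb_eval_rpow_le (p : ℝ[X]) (hp : 0 < p.natDegree) {ρ : ℝ}
    (hρ : (p.natDegree : ℝ)⁻¹ < ρ) :
    ∫⁻ x, ENNReal.ofReal (1 / jb (p.eval x) ^ ρ) ≤
      ENNReal.ofReal (2 * p.natDegree / (1 - (p.natDegree * ρ)⁻¹) /
        |p.leadingCoeff| ^ (p.natDegree : ℝ)⁻¹) := by
  have hn : (0 : ℝ) < p.natDegree := Nat.cast_pos.mpr hp
  have hρ0 : 0 < ρ := (inv_pos.mpr hn).trans hρ
  have hjb : ∀ x, 1 ≤ jb (p.eval x) ^ ρ := fun x => Real.one_le_rpow (one_le_jb _) hρ0.le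
  have hf : Measurable fun x => 1 / jb (p.eval x) ^ ρ := by unfold jb; fun_prop
  rw [div_right_comm]
  refine lintegral_ofReal_le_of_meas_lt_le_mul_rpow hf.aemeasurable
    (fun x => one_div_nonneg.mpr (zero_le_one.trans (hjb x)))
    (fun x => div_le_one_of_le₀ (hjb x) (zero_le_one.trans (hjb x))) (by positivity) ?_ ?_
  · refine inv_lt_one_of_one_lt₀ ?_
    simpa [mul_inv_cancel₀ hn.ne'] using mul_lt_mul_of_pos_left hρ hn
  · intro t ⟨ht, _⟩
    calc volume {x | t < 1 / jb (p.eval x) ^ ρ}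
        ≤ volume {x | |p.eval x| ≤ t ^ (-ρ⁻¹)} :=
          measure_mono fun x hx => abs_le_of_lt_one_div_jb_rpow ht hρ0 hx
      _ ≤ _ := p.volume_setOf_abs_eval_le_le hp (by positivity)
      _ = _ := by
          rw [Real.div_rpow (by positivity) (abs_nonneg _), ← Real.rpow_mul ht.le, mul_inv]
          ring_nf

end Polynomial

theorem stmt11 (ρ : ℝ) (hρ : 1/3 < ρ) :
    ∃ C : ℝ, 0 < C ∧
      ∀ σ₀ σ₁ σ₂ σ₃ : ℝ, σ₃ ≠ 0 →
        (∫⁻ x : ℝ, ENNReal.ofReal (1 / jb (σ₃ * x ^ 3 + σ₂ * x ^ 2 + σ₁ * x + σ₀) ^ ρ)) ≤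
          ENNReal.ofReal (C / |σ₃| ^ (1/3 : ℝ)) := by
  have hρ3 : (3 * ρ)⁻¹ < 1 := inv_lt_one_of_one_lt₀ (by linarith)
  refine ⟨6 / (1 - (3 * ρ)⁻¹), div_pos (by norm_num) (sub_pos.mpr hρ3),
    fun σ₀ σ₁ σ₂ σ₃ h3 => ?_⟩
  set p : ℝ[X] := C σ₃ * X ^ 3 + C σ₂ * X ^ 2 + C σ₁ * X + C σ₀
  have hdeg : p.natDegree = 3 := natDegree_cubic h3
  have hlc : p.leadingCoeff = σ₃ := leadingCoeff_cubic h3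
  have hbound := p.lintegral_one_div_jb_eval_rpow_le (ρ := ρ) (by omega)
    (by rw [hdeg]; norm_num; linarith)
  simp only [hdeg, hlc] at hbound
  convert hbound using 3 <;> norm_num [p]
end

section
/- Let s ∈ ℝ and 0 < β ≤ 1, and set P_β(μ) = μ³ - βμ. There exists a constant C₁ = C₁(s), independent of β, with the following property: if M : ℝ → ℂ is measurable and satisfies |M(μ)| ≤ C |3μ² - β|^{1/2} ⟨μ⟩^{s+1} for all μ ∈ ℝ and some constant C > 0, then for every measurable g : ℝ → ℂ, (∫_ℝ |M(μ)|² |g(P_β(μ))|² dμ)^{1/2} ≤ C · C₁ · (∫_ℝ ⟨ξ⟩^{2(s+1)/3} |g(ξ)|² dξ)^{1/2}. -/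
open MeasureTheory

/-!
For `0 ≤ β ≤ 1` the weights are comparable, `⟨μ⟩³ ≤ 13 ⟨P(μ)⟩` and `⟨P(μ)⟩ ≤ 13 ⟨μ⟩³`, hence
`⟨μ⟩^{2(s+1)} ≤ 13^{|t|} ⟨P(μ)⟩^t` with `t = 2(s+1)/3`. The hypothesis on `M` then bounds the
integrand by `C² 13^{|t|} |P'(μ)| ⟨P(μ)⟩^t |g(P(μ))|²`, and the substitution `ξ = P(μ)` on each
of the three intervals where `P` is monotone costs a factor `3`; so `C₁ = (3 · 13^{|t|})^{1/2}`.
-/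

open Set

open scoped ENNReal

lemma jb_pos (x : ℝ) : 0 < jb x := Real.sqrt_pos.2 (by positivity)

lemma jb_sq (x : ℝ) : jb x ^ 2 = 1 + x ^ 2 := Real.sq_sqrt (by positivity)

lemma jb_pow_three_le (x β : ℝ) (hβ : β ≤ 1) : jb x ^ 3 ≤ 13 * jb (x ^ 3 - β * x) := by
  refine (pow_le_pow_iff_left₀ (pow_pos (jb_pos x) 3).le
    (mul_pos (by norm_num) (jb_pos _)).le two_ne_zero).1 ?_
  rw [← pow_mul, show 3 * 2 = 2 * 3 by rfl, pow_mul, mul_pow, jb_sq, jb_sq,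
    show (x ^ 3 - β * x) ^ 2 = x ^ 2 * (x ^ 2 - β) ^ 2 by ring]
  nlinarith [sq_nonneg x, mul_nonneg (sq_nonneg x) (sq_nonneg (x ^ 2 - 341 / 336)),
    mul_nonneg (sq_nonneg x) (sq_nonneg (x ^ 2 - β)),
    mul_nonneg (mul_nonneg (sq_nonneg x) (sq_nonneg x)) (sub_nonneg.2 hβ),
    mul_nonneg (sq_nonneg x) (sub_nonneg.2 hβ)]

lemma jb_le_pow_three (x β : ℝ) (hβ₀ : 0 ≤ β) (hβ₁ : β ≤ 1) :
    jb (x ^ 3 - β * x) ≤ 13 * jb x ^ 3 := by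
  refine (pow_le_pow_iff_left₀ (jb_pos _).le
    (mul_pos (by norm_num) (pow_pos (jb_pos x) 3)).le two_ne_zero).1 ?_
  rw [mul_pow, ← pow_mul, show 3 * 2 = 2 * 3 by rfl, pow_mul, jb_sq, jb_sq,
    show (x ^ 3 - β * x) ^ 2 = x ^ 2 * (x ^ 2 - β) ^ 2 by ring]
  nlinarith [mul_nonneg (sq_nonneg x) (sq_nonneg (x ^ 2 - β)),
    mul_nonneg (mul_nonneg (sq_nonneg x) (sq_nonneg x)) hβ₀,
    mul_nonneg (sq_nonneg x) hβ₀, sq_nonneg x,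
    mul_nonneg (mul_nonneg (sq_nonneg x) (sq_nonneg x)) (sq_nonneg x),
    mul_nonneg (mul_nonneg (sq_nonneg x) (sq_nonneg x)) (sub_nonneg.2 hβ₁),
    mul_nonneg (sq_nonneg x) (sub_nonneg.2 hβ₁)]

lemma Real.rpow_le_rpow_abs_mul_rpow {a b K : ℝ} (ha : 0 < a) (hb : 0 < b)
    (hab : a ≤ K * b) (hba : b ≤ K * a) (t : ℝ) : a ^ t ≤ K ^ |t| * b ^ t := by
  have hK : 0 < K := pos_of_mul_pos_left (ha.trans_le hab) hb.le
  rcases le_or_gt 0 t with ht | ht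
  · rw [abs_of_nonneg ht, ← Real.mul_rpow hK.le hb.le]
    exact Real.rpow_le_rpow ha.le hab ht
  · rw [abs_of_neg ht, Real.rpow_neg hK.le, ← div_eq_inv_mul,
      le_div_iff₀' (Real.rpow_pos_of_pos hK _), ← Real.mul_rpow hK.le ha.le]
    exact Real.rpow_le_rpow_of_nonpos hb hba ht.le

lemma jb_rpow_three_mul_le (x β t : ℝ) (hβ₀ : 0 ≤ β) (hβ₁ : β ≤ 1) :
    jb x ^ (3 * t) ≤ 13 ^ |t| * jb (x ^ 3 - β * x) ^ t := by
  rw [Real.rpow_mul (jb_pos x).le, Real.rpow_ofNat]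
  exact Real.rpow_le_rpow_abs_mul_rpow (pow_pos (jb_pos x) 3) (jb_pos _)
    (jb_pow_three_le x β hβ₁) (jb_le_pow_three x β hβ₀ hβ₁) t

lemma lintegral_abs_deriv_mul_comp_le {f f' : ℝ → ℝ} {s : Set ℝ} (hs : MeasurableSet s)
    (hf' : ∀ x ∈ s, HasDerivWithinAt f (f' x) s x) (hf : InjOn f s) (H : ℝ → ℝ≥0∞) :
    ∫⁻ x in s, ENNReal.ofReal |f' x| * H (f x) ≤ ∫⁻ y, H y :=
  (lintegral_image_eq_lintegral_abs_deriv_mul hs hf' hf H).symm.trans_le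
    (setLIntegral_le_lintegral _ _)

lemma hasDerivAt_cubic (β x : ℝ) : HasDerivAt (fun y ↦ y ^ 3 - β * y) (3 * x ^ 2 - β) x := by
  simpa using (hasDerivAt_pow 3 x).fun_sub ((hasDerivAt_id' x).const_mul β)

lemma lintegral_abs_deriv_mul_comp_cubic_le (β : ℝ) (hβ : 0 ≤ β) (H : ℝ → ℝ≥0∞) :
    ∫⁻ x, ENNReal.ofReal |3 * x ^ 2 - β| * H (x ^ 3 - β * x) ≤ 3 * ∫⁻ y, H y := by
  set P : ℝ → ℝ := fun y ↦ y ^ 3 - β * y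
  set r := √(β / 3)
  have hr : 0 ≤ r := Real.sqrt_nonneg _
  have hr2 : r ^ 2 = β / 3 := Real.sq_sqrt (by linarith)
  have hP : Continuous P := by fun_prop
  have hP' (x : ℝ) : deriv P x = 3 * x ^ 2 - β := (hasDerivAt_cubic β x).deriv
  have hleft : StrictMonoOn P (Iic (-r)) := by
    refine strictMonoOn_of_deriv_pos (convex_Iic _) hP.continuousOn fun x hx ↦ ?_
    rw [interior_Iic, mem_Iio] at hx
    rw [hP']
    nlinarith [mul_pos (show 0 < r - x by linarith) (show 0 < -r - x by linarith)]
  have hmid : StrictAntiOn P (Icc (-r) r) := by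
    refine strictAntiOn_of_deriv_neg (convex_Icc _ _) hP.continuousOn fun x hx ↦ ?_
    rw [interior_Icc, mem_Ioo] at hx
    rw [hP']
    nlinarith [mul_pos (show 0 < r - x by linarith) (show 0 < r + x by linarith)]
  have hright : StrictMonoOn P (Ici r) := by
    refine strictMonoOn_of_deriv_pos (convex_Ici _) hP.continuousOn fun x hx ↦ ?_
    rw [interior_Ici, mem_Ioi] at hx
    rw [hP']
    nlinarith [mul_pos (show 0 < x - r by linarith) (show 0 < x + r by linarith)]
  have hcover : Iic (-r) ∪ (Icc (-r) r ∪ Ici r) = univ := by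
    rw [Icc_union_Ici_eq_Ici (by linarith), Iic_union_Ici_of_le le_rfl]
  have piece {u : Set ℝ} (hu : MeasurableSet u) (hinj : InjOn P u) :=
    lintegral_abs_deriv_mul_comp_le hu (fun x _ ↦ (hasDerivAt_cubic β x).hasDerivWithinAt) hinj H
  calc ∫⁻ x, ENNReal.ofReal |3 * x ^ 2 - β| * H (P x)
      = ∫⁻ x in Iic (-r) ∪ (Icc (-r) r ∪ Ici r), ENNReal.ofReal |3 * x ^ 2 - β| * H (P x) := by
        rw [hcover, setLIntegral_univ]
    _ ≤ (∫⁻ x in Iic (-r), ENNReal.ofReal |3 * x ^ 2 - β| * H (P x)) +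
        ((∫⁻ x in Icc (-r) r, ENNReal.ofReal |3 * x ^ 2 - β| * H (P x)) +
          ∫⁻ x in Ici r, ENNReal.ofReal |3 * x ^ 2 - β| * H (P x)) :=
        (lintegral_union_le _ _ _).trans (add_le_add_right (lintegral_union_le _ _ _) _)
    _ ≤ (∫⁻ y, H y) + ((∫⁻ y, H y) + ∫⁻ y, H y) :=
        add_le_add (piece measurableSet_Iic hleft.injOn)
          (add_le_add (piece measurableSet_Icc hmid.injOn) (piece measurableSet_Ici hright.injOn))
    _ = 3 * ∫⁻ y, H y := by ring

lemma ENNReal.rpow_one_half_le_ofReal_mul {A B : ℝ≥0∞} {c : ℝ} (hc : 0 ≤ c)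
    (h : A ≤ ENNReal.ofReal (c ^ 2) * B) : A ^ (1 / 2 : ℝ) ≤ ENNReal.ofReal c * B ^ (1 / 2 : ℝ) :=
  calc A ^ (1 / 2 : ℝ) ≤ (ENNReal.ofReal (c ^ 2) * B) ^ (1 / 2 : ℝ) :=
        ENNReal.rpow_le_rpow h (by norm_num)
    _ = ENNReal.ofReal c * B ^ (1 / 2 : ℝ) := by
        rw [ENNReal.mul_rpow_of_nonneg _ _ (by norm_num),
          ENNReal.ofReal_rpow_of_nonneg (sq_nonneg c) (by norm_num), ← Real.sqrt_eq_rpow,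
          Real.sqrt_sq hc]

lemma sq_le_of_le_mul_sqrt_abs_deriv_cubic {β C m μ s : ℝ} (hβ₀ : 0 ≤ β) (hβ₁ : β ≤ 1)
    (hm₀ : 0 ≤ m) (hm : m ≤ C * |3 * μ ^ 2 - β| ^ (1 / 2 : ℝ) * jb μ ^ (s + 1)) :
    m ^ 2 ≤ C ^ 2 * 13 ^ |2 * (s + 1) / 3| *
      (|3 * μ ^ 2 - β| * jb (μ ^ 3 - β * μ) ^ (2 * (s + 1) / 3)) := by
  set t := 2 * (s + 1) / 3
  have hweight : (jb μ ^ (s + 1)) ^ 2 = jb μ ^ (3 * t) := by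
    rw [← Real.rpow_natCast, ← Real.rpow_mul (jb_pos μ).le]
    congr 1
    push_cast
    ring
  calc m ^ 2 ≤ (C * |3 * μ ^ 2 - β| ^ (1 / 2 : ℝ) * jb μ ^ (s + 1)) ^ 2 :=
        pow_le_pow_left₀ hm₀ hm 2
    _ = C ^ 2 * (|3 * μ ^ 2 - β| * jb μ ^ (3 * t)) := by
        rw [mul_pow, mul_pow, ← Real.sqrt_eq_rpow, Real.sq_sqrt (abs_nonneg _), hweight]
        ring
    _ ≤ C ^ 2 * (|3 * μ ^ 2 - β| * (13 ^ |t| * jb (μ ^ 3 - β * μ) ^ t)) := by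
        gcongr
        exact jb_rpow_three_mul_le μ β t hβ₀ hβ₁
    _ = C ^ 2 * 13 ^ |t| * (|3 * μ ^ 2 - β| * jb (μ ^ 3 - β * μ) ^ t) := by ring

theorem stmt12 (s : ℝ) :
    ∃ C₁ : ℝ, 0 < C₁ ∧
      ∀ β : ℝ, 0 < β → β ≤ 1 →
        ∀ M : ℝ → ℂ, Measurable M →
          ∀ C : ℝ, 0 < C →
            (∀ μ : ℝ, ‖M μ‖ ≤ C * |3 * μ ^ 2 - β| ^ (1/2 : ℝ) * jb μ ^ (s + 1)) →
            ∀ g : ℝ → ℂ, Measurable g →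
              (∫⁻ μ : ℝ, ENNReal.ofReal (‖M μ‖ ^ 2 * ‖g (μ ^ 3 - β * μ)‖ ^ 2)) ^ (1/2 : ℝ) ≤
                ENNReal.ofReal (C * C₁) *
                  (∫⁻ ξ : ℝ, ENNReal.ofReal (jb ξ ^ (2 * (s + 1) / 3) * ‖g ξ‖ ^ 2)) ^ (1/2 : ℝ) := by
  set t := 2 * (s + 1) / 3
  set K : ℝ := 13 ^ |t|
  refine ⟨√(3 * K), by positivity, fun β hβ₀ hβ₁ M _ C hC hM g _ ↦ ?_⟩
  set H : ℝ → ℝ≥0∞ := fun ξ ↦ ENNReal.ofReal (jb ξ ^ t * ‖g ξ‖ ^ 2)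
  have hpointwise (μ : ℝ) : ENNReal.ofReal (‖M μ‖ ^ 2 * ‖g (μ ^ 3 - β * μ)‖ ^ 2) ≤
      ENNReal.ofReal (C ^ 2 * K) * (ENNReal.ofReal |3 * μ ^ 2 - β| * H (μ ^ 3 - β * μ)) := by
    rw [← ENNReal.ofReal_mul (abs_nonneg _), ← ENNReal.ofReal_mul (by positivity)]
    refine ENNReal.ofReal_le_ofReal ?_
    have := mul_le_mul_of_nonneg_right
      (sq_le_of_le_mul_sqrt_abs_deriv_cubic hβ₀.le hβ₁ (norm_nonneg _) (hM μ))
      (sq_nonneg ‖g (μ ^ 3 - β * μ)‖)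
    linarith
  refine ENNReal.rpow_one_half_le_ofReal_mul (by positivity) ?_
  calc ∫⁻ μ, ENNReal.ofReal (‖M μ‖ ^ 2 * ‖g (μ ^ 3 - β * μ)‖ ^ 2)
      ≤ ∫⁻ μ, ENNReal.ofReal (C ^ 2 * K) *
          (ENNReal.ofReal |3 * μ ^ 2 - β| * H (μ ^ 3 - β * μ)) := lintegral_mono hpointwise
    _ = ENNReal.ofReal (C ^ 2 * K) *
          ∫⁻ μ, ENNReal.ofReal |3 * μ ^ 2 - β| * H (μ ^ 3 - β * μ) :=
        lintegral_const_mul' _ _ ENNReal.ofReal_ne_top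
    _ ≤ ENNReal.ofReal (C ^ 2 * K) * (3 * ∫⁻ ξ, H ξ) := by
        gcongr
        exact lintegral_abs_deriv_mul_comp_cubic_le β hβ₀.le H
    _ = ENNReal.ofReal ((C * √(3 * K)) ^ 2) * ∫⁻ ξ, H ξ := by
        rw [mul_pow, Real.sq_sqrt (by positivity), ← mul_assoc, mul_comm _ (3 : ℝ≥0∞),
          ← ENNReal.ofReal_ofNat 3, ← ENNReal.ofReal_mul (by norm_num)]
        ring_nf
end
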